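/- For d ≥ 4 and any N > 0 there exists a lattice simplex in R^d whose only lattice points are its vertices and whose volume exceeds N. Concretely, for pairwise coprime positive integers a, b, c, the simplex P = conv(0, e_1, e_2, e_1+e_2+a·e_3, e_1+e_2+b·e_4, e_1+e_2+c·e_5) ⊆ R^5 contains no lattice points other than its six vertices, while its normalized volume is a·b·c. -/

import Mathlib

/-- The vertices `0, e₁, e₂, e₁+e₂+a·e₃, e₁+e₂+b·e₄, e₁+e₂+c·e₅` of the simplex
`P ⊆ ℝ^5`. -/
noncomputable def reeveVerts (a b c : ℕ) : Fin 6 → Fin 5 → ℝ :=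
  ![0, Pi.single 0 1, Pi.single 1 1,
    Pi.single 0 1 + Pi.single 1 1 + (a : ℝ) • (Pi.single 2 1 : Fin 5 → ℝ),
    Pi.single 0 1 + Pi.single 1 1 + (b : ℝ) • (Pi.single 3 1 : Fin 5 → ℝ),
    Pi.single 0 1 + Pi.single 1 1 + (c : ℝ) • (Pi.single 4 1 : Fin 5 → ℝ)]

/-!
Index the basis of `ℝ^(k+2)` from `0` and let `s(x) = ∑ⱼ x_{j+2} / aⱼ` (`ReeveSimplex.level`).
The simplex `conv(0, e₀, e₁, e₀ + e₁ + aⱼ e_{j+2})` has the explicit barycentric coordinates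
`1 + s - x₀ - x₁`, `x₀ - s`, `x₁ - s`, `x_{j+2} / aⱼ`. At a lattice point of the simplex their
nonnegativity forces `s ∈ {0, 1}`; clearing denominators in `∑ⱼ x_{j+2} / aⱼ ∈ ℤ`, pairwise
coprimality gives `aⱼ ∣ x_{j+2}`. So the barycentric coordinates are nonnegative integers summing
to `1`, and the point is a vertex.

The edge matrix is lower triangular with diagonal `1, 1, a₀, …, a_{k-1}`. For `a = (n, 1, …, 1)`
the simplex contains a box of volume proportional to `n`, so its volume is unbounded.
-/

open Finset Function

@[simp] theorem Fin.cons_cons_two {n : ℕ} {α : Type*} (x y : α) (p : Fin (n + 1) → α) :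
    (Fin.cons x (Fin.cons y p) : Fin (n + 3) → α) 2 = p 0 :=
  rfl

theorem Fin.one_ne_succ_succ {n : ℕ} (i : Fin n) : (1 : Fin (n + 2)) ≠ i.succ.succ :=
  i.succ_succ_ne_one.symm

theorem mem_convexHull_range_iff_exists_stdSimplex {R ι E : Type*} [Field R] [LinearOrder R]
    [IsStrictOrderedRing R] [Fintype ι] [AddCommGroup E] [Module R E] {v : ι → E} {x : E} :
    x ∈ convexHull R (Set.range v) ↔ ∃ w ∈ stdSimplex R ι, ∑ i, w i • v i = x := by
  classical
  have hv : Set.range v = Fintype.linearCombination R v '' Set.range fun i => Pi.single i 1 := by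
    rw [← Set.range_comp]
    congr 1
    funext i
    simp
  rw [hv, ← LinearMap.image_convexHull, convexHull_rangle_single_eq_stdSimplex]
  simp [Fintype.linearCombination_apply]

theorem dvd_of_sum_div_eq_intCast {ι K : Type*} [Fintype ι] [DecidableEq ι] [Field K]
    [CharZero K] {a n : ι → ℤ} (ha : ∀ i, a i ≠ 0) (hco : Pairwise (IsCoprime on a)) {m : ℤ}
    (h : ∑ i, (n i : K) / a i = m) (j : ι) : a j ∣ n j := by
  have hcleared : ∑ i, n i * ∏ l ∈ univ.erase i, a l = m * ∏ l, a l := by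
    have hterm (i : ι) :
        (n i : K) / a i * ∏ l, (a l : K) = n i * ∏ l ∈ univ.erase i, (a l : K) := by
      rw [← mul_prod_erase univ _ (mem_univ i)]
      field_simp [(Int.cast_ne_zero.mpr (ha i) : (a i : K) ≠ 0)]
    have hK : ∑ i, (n i : K) * ∏ l ∈ univ.erase i, (a l : K) = m * ∏ l, (a l : K) := by
      rw [← h, sum_mul]
      exact sum_congr rfl fun i _ => (hterm i).symm
    exact_mod_cast hK
  have hdvd : a j ∣ n j * ∏ l ∈ univ.erase j, a l := by
    have hsplit := add_sum_erase univ (fun i => n i * ∏ l ∈ univ.erase i, a l) (mem_univ j)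
    rw [hcleared] at hsplit
    rw [eq_sub_of_add_eq hsplit]
    refine dvd_sub (dvd_mul_of_dvd_right (dvd_prod_of_mem a (mem_univ j)) _)
      (dvd_sum fun i hi => dvd_mul_of_dvd_right (dvd_prod_of_mem a ?_) _)
    exact mem_erase.mpr ⟨fun hji => ne_of_mem_erase hi hji.symm, mem_univ j⟩
  exact (IsCoprime.prod_right fun i hi => hco (ne_of_mem_erase hi).symm).dvd_of_dvd_mul_right hdvd

theorem exists_eq_single_of_intCast_of_sum_eq_one {ι K : Type*} [Fintype ι] [DecidableEq ι]
    [Field K] [LinearOrder K] [IsStrictOrderedRing K] {w : ι → K} (hw₀ : ∀ i, 0 ≤ w i)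
    (hw₁ : ∑ i, w i = 1) (hint : ∀ i, ∃ n : ℤ, w i = n) : ∃ i, w = Pi.single i 1 := by
  obtain ⟨i, hi⟩ : ∃ i, w i ≠ 0 := by
    by_contra! h
    simp [h] at hw₁
  have hwi : w i = 1 := by
    obtain ⟨n, hn⟩ := hint i
    have hpos : 0 < n := by exact_mod_cast hn ▸ lt_of_le_of_ne (hw₀ i) (Ne.symm hi)
    have hle : n ≤ 1 := by exact_mod_cast hn ▸ hw₁ ▸ single_le_sum (fun j _ => hw₀ j) (mem_univ i)
    rw [hn, le_antisymm hle hpos, Int.cast_one]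
  have hrest : ∑ j ∈ univ.erase i, w j = 0 := by
    linarith [add_sum_erase univ w (mem_univ i)]
  refine ⟨i, funext fun j => ?_⟩
  rcases eq_or_ne j i with rfl | hj
  · simp [hwi]
  · rw [Pi.single_eq_of_ne hj]
    exact (sum_eq_zero_iff_of_nonneg fun j _ => hw₀ j).mp hrest j (mem_erase.mpr ⟨hj, mem_univ j⟩)

theorem affineIndependent_of_det_sub_ne_zero {K : Type*} [Field K] {n : ℕ}
    {v : Fin (n + 1) → Fin n → K} (h : (Matrix.of fun i j => v i.succ j - v 0 j).det ≠ 0) :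
    AffineIndependent K v := by
  rw [affineIndependent_iff_linearIndependent_vsub K v 0,
    ← linearIndependent_equiv (finSuccAboveEquiv 0)]
  simp only [comp_def, finSuccAboveEquiv_apply, Fin.succAbove_zero, vsub_eq_sub]
  exact Matrix.linearIndependent_rows_of_det_ne_zero h

namespace ReeveSimplex

variable {k : ℕ} (a : Fin k → ℕ)

noncomputable def verts : Fin (k + 2 + 1) → Fin (k + 2) → ℝ :=
  Fin.cons 0 (Fin.cons (Pi.single 0 1) (Fin.cons (Pi.single 1 1)
    fun j => Pi.single 0 1 + Pi.single 1 1 + (a j : ℝ) • Pi.single j.succ.succ 1))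

noncomputable def level (x : Fin (k + 2) → ℝ) : ℝ := ∑ j, x j.succ.succ / a j

noncomputable def baryCoords (x : Fin (k + 2) → ℝ) : Fin (k + 2 + 1) → ℝ :=
  Fin.cons (1 + level a x - x 0 - x 1)
    (Fin.cons (x 0 - level a x) (Fin.cons (x 1 - level a x) fun j => x j.succ.succ / a j))

noncomputable def boxLo : Fin (k + 2) → ℝ :=
  Fin.cons (1 / 2) (Fin.cons (1 / 2) fun j => a j / (4 * k))

noncomputable def boxHi : Fin (k + 2) → ℝ :=
  Fin.cons (5 / 8) (Fin.cons (5 / 8) fun j => a j / (2 * k))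

variable {a}

theorem sum_smul_verts (w : Fin (k + 2 + 1) → ℝ) :
    ∑ i, w i • verts a i = Fin.cons (w 1 + ∑ j : Fin k, w j.succ.succ.succ)
      (Fin.cons (w 2 + ∑ j : Fin k, w j.succ.succ.succ) fun j => a j * w j.succ.succ.succ) := by
  funext c
  refine Fin.cases ?_ (Fin.cases ?_ fun j => ?_) c
  · simp [Fin.sum_univ_succ, verts, Finset.sum_apply]
  · simp [Fin.sum_univ_succ, verts, Finset.sum_apply, Fin.one_ne_succ_succ]
  · simp [Fin.sum_univ_succ, verts, Finset.sum_apply, Pi.single_apply, Fin.succ_succ_ne_one,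
      mul_comm]

theorem sum_baryCoords (x : Fin (k + 2) → ℝ) : ∑ i, baryCoords a x i = 1 := by
  simp [Fin.sum_univ_succ, baryCoords, level]

theorem sum_baryCoords_smul_verts (ha : ∀ j, a j ≠ 0) (x : Fin (k + 2) → ℝ) :
    ∑ i, baryCoords a x i • verts a i = x := by
  rw [sum_smul_verts]
  funext c
  refine Fin.cases ?_ (Fin.cases ?_ fun j => ?_) c
  · simp [baryCoords, level]
  · simp [baryCoords, level]
  · have : (a j : ℝ) ≠ 0 := Nat.cast_ne_zero.mpr (ha j)
    simp [baryCoords]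
    field_simp

theorem baryCoords_sum_smul_verts (ha : ∀ j, a j ≠ 0) {w : Fin (k + 2 + 1) → ℝ}
    (hw : ∑ i, w i = 1) : baryCoords a (∑ i, w i • verts a i) = w := by
  have hlevel : level a (∑ i, w i • verts a i) = ∑ j : Fin k, w j.succ.succ.succ := by
    rw [level, sum_smul_verts]
    refine sum_congr rfl fun j _ => ?_
    have : (a j : ℝ) ≠ 0 := Nat.cast_ne_zero.mpr (ha j)
    simp
    field_simp
  simp only [Fin.sum_univ_succ, Fin.succ_zero_eq_one, Fin.succ_one_eq_two] at hw
  funext i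
  refine Fin.cases ?_ (Fin.cases ?_ (Fin.cases ?_ fun j => ?_)) i
  · rw [baryCoords, hlevel, sum_smul_verts]; simp; linarith
  · rw [baryCoords, hlevel, sum_smul_verts]; simp
  · rw [baryCoords, hlevel, sum_smul_verts]; simp
  · have : (a j : ℝ) ≠ 0 := Nat.cast_ne_zero.mpr (ha j)
    rw [baryCoords, sum_smul_verts]
    simp
    field_simp

theorem mem_convexHull_iff (ha : ∀ j, a j ≠ 0) {x : Fin (k + 2) → ℝ} :
    x ∈ convexHull ℝ (Set.range (verts a)) ↔ 0 ≤ baryCoords a x := by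
  rw [mem_convexHull_range_iff_exists_stdSimplex]
  constructor
  · rintro ⟨w, hw, rfl⟩
    rw [baryCoords_sum_smul_verts ha hw.2]
    exact hw.1
  · exact fun h => ⟨baryCoords a x, ⟨h, sum_baryCoords x⟩, sum_baryCoords_smul_verts ha x⟩

theorem exists_verts_apply_eq_intCast (i : Fin (k + 2 + 1)) (c : Fin (k + 2)) :
    ∃ n : ℤ, verts a i c = n := by
  refine Fin.cases ?_ (Fin.cases ?_ (Fin.cases ?_ fun j => ?_)) i
  · exact ⟨0, by simp [verts]⟩
  · exact ⟨(Pi.single 0 1 : Fin (k + 2) → ℤ) c, by simp [verts, Pi.single_apply, apply_ite]⟩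
  · exact ⟨(Pi.single 1 1 : Fin (k + 2) → ℤ) c, by simp [verts, Pi.single_apply, apply_ite]⟩
  · refine ⟨(Pi.single 0 1 + Pi.single 1 1 + (a j : ℤ) • Pi.single j.succ.succ 1 :
      Fin (k + 2) → ℤ) c, ?_⟩
    simp [verts, Pi.single_apply]

theorem det_verts_sub_verts_zero :
    (Matrix.of fun i j : Fin (k + 2) => verts a i.succ j - verts a 0 j).det = ∏ j, (a j : ℝ) := by
  rw [Matrix.det_of_isLowerTriangular]
  · simp [Fin.prod_univ_succ, verts, Fin.succ_succ_ne_one]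
  · intro i j
    show i < j → _
    refine Fin.cases ?_ (Fin.cases ?_ fun i => ?_) i <;>
      refine Fin.cases ?_ (Fin.cases ?_ fun j => ?_) j <;>
      simp [verts, Pi.single_apply, Fin.succ_succ_ne_one]
    omega

theorem level_eq_zero_or_one {x : Fin (k + 2) → ℝ} (hb : 0 ≤ baryCoords a x)
    (h0 : ∃ n : ℤ, x 0 = n) (h1 : ∃ n : ℤ, x 1 = n) : level a x = 0 ∨ level a x = 1 := by
  obtain ⟨n₀, hn₀⟩ := h0
  obtain ⟨n₁, hn₁⟩ := h1
  have hb₀ := hb 0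
  have hb₁ := hb 1
  have hb₂ := hb 2
  have hs : 0 ≤ level a x := sum_nonneg fun j _ => hb j.succ.succ.succ
  simp only [baryCoords, Pi.zero_apply, Fin.cons_zero, Fin.cons_one, Fin.cons_cons_two, hn₀,
    hn₁] at hb₀ hb₁ hb₂
  by_contra! h
  have hs₁ : level a x < 1 := lt_of_le_of_ne (by linarith) h.2
  have hs₀ : 0 < level a x := lt_of_le_of_ne hs (Ne.symm h.1)
  have hn₀ : (1 : ℝ) ≤ n₀ := Int.cast_one_le_of_pos ((Int.cast_pos (R := ℝ)).mp (by linarith))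
  have hn₁ : (1 : ℝ) ≤ n₁ := Int.cast_one_le_of_pos ((Int.cast_pos (R := ℝ)).mp (by linarith))
  linarith

theorem eq_verts_of_mem_convexHull (ha : ∀ j, 0 < a j) (hco : Pairwise (Nat.Coprime on a))
    {x : Fin (k + 2) → ℝ} (hx : x ∈ convexHull ℝ (Set.range (verts a)))
    (hint : ∀ c, ∃ n : ℤ, x c = n) : ∃ i, x = verts a i := by
  have ha' : ∀ j, a j ≠ 0 := fun j => (ha j).ne'
  have hb := (mem_convexHull_iff ha').mp hx
  choose n hn using hint
  obtain ⟨m, hm⟩ : ∃ m : ℤ, level a x = m := by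
    rcases level_eq_zero_or_one hb ⟨_, hn 0⟩ ⟨_, hn 1⟩ with h | h
    exacts [⟨0, by simp [h]⟩, ⟨1, by simp [h]⟩]
  have hdvd : ∀ j, (a j : ℤ) ∣ n j.succ.succ := by
    refine dvd_of_sum_div_eq_intCast (K := ℝ) (m := m) (fun j => by exact_mod_cast ha' j)
      (fun i j hij => Nat.isCoprime_iff_coprime.mpr (hco hij)) ?_
    simpa [level, hn] using hm
  have hbint : ∀ i, ∃ n : ℤ, baryCoords a x i = n := by
    intro i
    refine Fin.cases ?_ (Fin.cases ?_ (Fin.cases ?_ fun j => ?_)) i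
    · exact ⟨1 + m - n 0 - n 1, by simp [baryCoords, hm, hn]⟩
    · exact ⟨n 0 - m, by simp [baryCoords, hm, hn]⟩
    · exact ⟨n 1 - m, by simp [baryCoords, hm, hn]⟩
    · obtain ⟨q, hq⟩ := hdvd j
      refine ⟨q, ?_⟩
      have : (a j : ℝ) ≠ 0 := Nat.cast_ne_zero.mpr (ha' j)
      simp [baryCoords, hn, hq]
      field_simp
  obtain ⟨i, hi⟩ := exists_eq_single_of_intCast_of_sum_eq_one hb (sum_baryCoords x) hbint
  refine ⟨i, ?_⟩
  rw [← sum_baryCoords_smul_verts ha' x, hi]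
  simp [Pi.single_apply]

/- On the box the level lies in `[1/4, 1/2]`, which keeps every barycentric coordinate
nonnegative. -/
theorem Icc_boxLo_boxHi_subset_convexHull (hk : 0 < k) (ha : ∀ j, 0 < a j) :
    Set.Icc (boxLo a) (boxHi a) ⊆ convexHull ℝ (Set.range (verts a)) := by
  rintro y ⟨hlo, hhi⟩
  have hk' : (0 : ℝ) < k := by exact_mod_cast hk
  have hquot (j : Fin k) :
      1 / (4 * k) ≤ y j.succ.succ / a j ∧ y j.succ.succ / a j ≤ 1 / (2 * k) := by
    have haj : (0 : ℝ) < a j := by exact_mod_cast ha j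
    have hl := hlo j.succ.succ
    have hh := hhi j.succ.succ
    simp only [boxLo, boxHi, Fin.cons_succ] at hl hh
    constructor
    · rw [le_div_iff₀ haj]; convert hl using 1; ring
    · rw [div_le_iff₀ haj]; convert hh using 1; ring
  have hlevel₁ : 1 / 4 ≤ level a y :=
    calc (1 / 4 : ℝ) = ∑ _j : Fin k, 1 / (4 * (k : ℝ)) := by simp; field_simp
      _ ≤ level a y := sum_le_sum fun j _ => (hquot j).1
  have hlevel₂ : level a y ≤ 1 / 2 :=
    calc level a y ≤ ∑ _j : Fin k, 1 / (2 * (k : ℝ)) := sum_le_sum fun j _ => (hquot j).2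
      _ = 1 / 2 := by simp; field_simp
  have h₀ := hlo 0
  have h₁ := hlo 1
  have h₀' := hhi 0
  have h₁' := hhi 1
  simp only [boxLo, boxHi, Fin.cons_zero, Fin.cons_one] at h₀ h₁ h₀' h₁'
  rw [mem_convexHull_iff fun j => (ha j).ne']
  intro i
  refine Fin.cases ?_ (Fin.cases ?_ (Fin.cases ?_ fun j => ?_)) i
  · simp only [baryCoords, Pi.zero_apply, Fin.cons_zero]; linarith
  · simp only [baryCoords, Pi.zero_apply, Fin.cons_succ, Fin.cons_zero]; linarith
  · simp only [baryCoords, Pi.zero_apply, Fin.cons_succ, Fin.cons_zero]; linarith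
  · simp only [baryCoords, Pi.zero_apply, Fin.cons_succ]
    exact (by positivity : (0 : ℝ) ≤ 1 / (4 * k)).trans (hquot j).1

theorem prod_div_le_volume_convexHull (hk : 0 < k) (ha : ∀ j, 0 < a j) :
    (∏ j, (a j : ℝ)) / (64 * (4 * k) ^ k) ≤
      (MeasureTheory.volume (convexHull ℝ (Set.range (verts a)))).toReal := by
  have hk' : (k : ℝ) ≠ 0 := by exact_mod_cast hk.ne'
  have hsides (c : Fin (k + 2)) : boxHi a c - boxLo a c =
      (Fin.cons (1 / 8) (Fin.cons (1 / 8) fun j => a j / (4 * k)) : Fin (k + 2) → ℝ) c := by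
    refine Fin.cases ?_ (Fin.cases ?_ fun j => ?_) c
    · simp [boxLo, boxHi]; norm_num
    · simp [boxLo, boxHi]; norm_num
    · simp [boxLo, boxHi]; field_simp; ring
  have hle : boxLo a ≤ boxHi a := fun c => by
    rw [← sub_nonneg, hsides]
    refine Fin.cases ?_ (Fin.cases ?_ fun j => ?_) c <;> simp; positivity
  calc (∏ j, (a j : ℝ)) / (64 * (4 * k) ^ k) = ∏ c, (boxHi a c - boxLo a c) := by
        simp only [hsides, Fin.prod_univ_succ, Fin.cons_zero, Fin.cons_succ, prod_div_distrib,
          prod_const, card_univ, Fintype.card_fin]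
        ring
    _ = (MeasureTheory.volume (Set.Icc (boxLo a) (boxHi a))).toReal :=
        (Real.volume_Icc_pi_toReal hle).symm
    _ ≤ _ := ENNReal.toReal_mono
        (((Set.finite_range _).isCompact_convexHull ℝ).measure_lt_top.ne)
        (MeasureTheory.measure_mono (Icc_boxLo_boxHi_subset_convexHull hk ha))

end ReeveSimplex

open ReeveSimplex in
theorem exists_hollow_lattice_simplex_volume_gt {d : ℕ} (hd : 3 ≤ d) (N : ℝ) :
    ∃ v : Fin (d + 1) → (Fin d → ℝ),
      AffineIndependent ℝ v ∧ (∀ i j, ∃ n : ℤ, v i j = n) ∧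
      (∀ x ∈ convexHull ℝ (Set.range v), (∀ j, ∃ n : ℤ, x j = n) → ∃ i, x = v i) ∧
      N < (MeasureTheory.volume (convexHull ℝ (Set.range v))).toReal := by
  obtain ⟨k, rfl⟩ : ∃ k, d = k + 2 := ⟨d - 2, by omega⟩
  have hk : 0 < k := by omega
  obtain ⟨n, hn⟩ := exists_nat_gt (64 * (4 * k) ^ k * N)
  set j₀ : Fin k := ⟨0, hk⟩
  let a : Fin k → ℕ := Pi.mulSingle j₀ (n + 1)
  have ha (j : Fin k) : 0 < a j := by
    rcases eq_or_ne j j₀ with rfl | hj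
    · simp [a]
    · simp [a, Pi.mulSingle_eq_of_ne hj]
  have hco : Pairwise (Nat.Coprime on a) := fun i j hij => by
    rcases eq_or_ne i j₀ with rfl | hi
    · simp [a, onFun, Pi.mulSingle_eq_of_ne hij.symm]
    · simp [a, onFun, Pi.mulSingle_eq_of_ne hi]
  have hprod : ∏ j, (a j : ℝ) = n + 1 := by
    simp [a, ← Nat.cast_prod, prod_pi_mulSingle']
  refine ⟨verts a, affineIndependent_of_det_sub_ne_zero ?_, exists_verts_apply_eq_intCast,
    fun x hx hint => eq_verts_of_mem_convexHull ha hco hx hint, ?_⟩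
  · rw [det_verts_sub_verts_zero, hprod]
    positivity
  · calc N < (n + 1) / (64 * (4 * k) ^ k) := by rw [lt_div_iff₀ (by positivity)]; linarith
      _ ≤ _ := hprod ▸ prod_div_le_volume_convexHull hk ha

theorem reeveVerts_eq_verts (a b c : ℕ) : reeveVerts a b c = ReeveSimplex.verts ![a, b, c] := by
  funext i
  fin_cases i <;> rfl

/-- For `d ≥ 4` and any `N > 0` there is a lattice `d`-simplex whose only lattice points
are its vertices and whose volume exceeds `N`.  Concretely, for pairwise coprime positive
`a, b, c`, the simplex `conv(0, e₁, e₂, e₁+e₂+a·e₃, e₁+e₂+b·e₄, e₁+e₂+c·e₅) ⊆ ℝ^5`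
contains no lattice points other than its six vertices, while its normalized volume is
`a·b·c`. -/
theorem large_hollow_simplices :
    (∀ d : ℕ, 4 ≤ d → ∀ N : ℝ, 0 < N → ∃ v : Fin (d + 1) → (Fin d → ℝ),
        AffineIndependent ℝ v ∧ (∀ i j, ∃ n : ℤ, v i j = n) ∧
        (∀ x ∈ convexHull ℝ (Set.range v), (∀ j, ∃ n : ℤ, x j = n) → ∃ i, x = v i) ∧
        N < (MeasureTheory.volume (convexHull ℝ (Set.range v))).toReal) ∧
    (∀ a b c : ℕ, 0 < a → 0 < b → 0 < c →
      Nat.Coprime a b → Nat.Coprime a c → Nat.Coprime b c →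
      (∀ x ∈ convexHull ℝ (Set.range (reeveVerts a b c)),
          (∀ j, ∃ n : ℤ, x j = n) → ∃ i, x = reeveVerts a b c i) ∧
      |(Matrix.of (fun i j : Fin 5 =>
          reeveVerts a b c i.succ j - reeveVerts a b c 0 j)).det| = (a * b * c : ℝ)) := by
  refine ⟨fun d hd N _ => exists_hollow_lattice_simplex_volume_gt (by omega) N, ?_⟩
  intro a b c ha hb hc hab hac hbc
  rw [reeveVerts_eq_verts]
  refine ⟨fun x hx hint => ReeveSimplex.eq_verts_of_mem_convexHull ?_ ?_ hx hint, ?_⟩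
  · intro j
    fin_cases j <;> assumption
  · intro i j hij
    fin_cases i <;> fin_cases j <;> simp [onFun, Nat.coprime_comm] at hij ⊢ <;> assumption
  · rw [ReeveSimplex.det_verts_sub_verts_zero, Fin.prod_univ_three, abs_of_nonneg (by positivity)]
    simp [mul_assoc]
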